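/- For any integer $k > 1$, let $G = P_{k^2} \,\square\, P_{k^2}$ be the grid graph (the Cartesian product of two paths of order $k^2$). Then $\frac{k^4}{(2k+1)^2} - 1 \le \dim_k(G) \le (k+2)^2 + (k+1)^2$; in particular $\dim_k(G) = \Theta(k^2)$. -/

import Mathlib

open SimpleGraph

/-- The distance-`k` truncated distance `dₖ(x,y) = min{d(x,y), k+1}`, valued in `ℕ∞`
(so unreachable pairs have distance `⊤`, which is truncated to `k+1`). -/
noncomputable def distK {V : Type*} (G : SimpleGraph V) (k : ℕ) (x y : V) : ℕ∞ :=
  min (G.edist x y) (k + 1)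

/-- `S` is a distance-`k` resolving set of `G`. -/
def IsDistKResolving {V : Type*} (G : SimpleGraph V) (k : ℕ) (S : Set V) : Prop :=
  ∀ x y : V, x ≠ y → ∃ z ∈ S, distK G k x z ≠ distK G k y z

/-- The distance-`k` dimension of a finite graph `G`: the minimum cardinality of a
distance-`k` resolving set of `G`. -/
noncomputable def dimK {V : Type*} [Fintype V] (G : SimpleGraph V) (k : ℕ) : ℕ :=
  sInf { m | ∃ S : Finset V, IsDistKResolving G k ↑S ∧ S.card = m }

/-!
Lower bound: a vertex farther than `k` from every landmark has the vector `(k+1, …, k+1)`, so all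
vertices but one lie in the `k`-balls around a resolving set, and a `k`-ball of the grid has at most
`(2k+1)²` vertices.

Upper bound: the lines at the multiples of `k - 1` cut the grid into `(k+1)²` square cells of side
`k - 1`; take as landmarks all cell corners and all cell centres. In the ℓ¹ metric a vertex on a
side of its cell is pinned by the two corners of that side. An interior vertex is pinned along one
axis by the two corners of a suitable side, both within distance `k`, and then along the other
axis by one of those corners together with the centre.
-/

open Finset

namespace SimpleGraph

lemma pathGraph_dist_val_le_length {n : ℕ} {i j : Fin n} (p : (pathGraph n).Walk i j) :
    Nat.dist i j ≤ p.length := by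
  induction p with
  | nil => simp
  | cons h _ ih =>
    rw [pathGraph_adj] at h
    rw [Walk.length_cons]
    unfold Nat.dist at *
    omega

lemma pathGraph_edist_le_of_val_add {n d : ℕ} {i j : Fin n} (h : i.val + d = j.val) :
    (pathGraph n).edist i j ≤ d := by
  induction d generalizing i with
  | zero => simp [Fin.ext (by omega : i.val = j.val)]
  | succ d ih =>
    let m : Fin n := ⟨i + 1, by omega⟩
    calc (pathGraph n).edist i j ≤ (pathGraph n).edist i m + (pathGraph n).edist m j :=
          SimpleGraph.edist_triangle
      _ ≤ 1 + d := by
          gcongr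
          · exact (edist_eq_one_iff_adj.2 (by simp [pathGraph_adj, m])).le
          · exact ih (by simp only [m]; omega)
      _ = (d + 1 : ℕ) := by push_cast; ring

theorem pathGraph_edist {n : ℕ} (i j : Fin n) : (pathGraph n).edist i j = Nat.dist i j := by
  obtain ⟨p, hp⟩ := (pathGraph_preconnected n i j).exists_walk_length_eq_edist
  refine le_antisymm ?_ (hp ▸ Nat.cast_le.2 (pathGraph_dist_val_le_length p))
  rcases le_total (i : ℕ) j with h | h
  · exact pathGraph_edist_le_of_val_add (by unfold Nat.dist; omega)
  · rw [edist_comm, Nat.dist_comm]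
    exact pathGraph_edist_le_of_val_add (by unfold Nat.dist; omega)

end SimpleGraph

def manhattan (u z : ℕ × ℕ) : ℕ := u.1.dist z.1 + u.2.dist z.2

theorem edist_pathGraph_boxProd {m n : ℕ} (u z : Fin m × Fin n) :
    (pathGraph m □ pathGraph n).edist u z
      = manhattan (Prod.map Fin.val Fin.val u) (Prod.map Fin.val Fin.val z) := by
  simp [edist_boxProd, pathGraph_edist, manhattan]

lemma Nat.eq_of_dist_eq_of_dist_eq {x y p q : ℕ} (hpq : p ≠ q) (hp : y.dist p = x.dist p)
    (hq : y.dist q = x.dist q) : y = x := by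
  unfold Nat.dist at *
  omega

lemma Nat.eq_of_dist_add_dist_eq {x y p q : ℕ} (hpx : p < x) (hxq : x < q)
    (h : y.dist p + x.dist q = x.dist p + y.dist q) : y = x := by
  unfold Nat.dist at *
  omega

section Manhattan

variable {u v : ℕ × ℕ}

lemma eq_of_manhattan_eq_of_mem_segment {z z' : ℕ × ℕ} (hzz' : z.1 = z'.1 ∨ z.2 = z'.2)
    (hu : manhattan u z + manhattan u z' = manhattan z z')
    (hz : manhattan v z = manhattan u z) (hz' : manhattan v z' = manhattan u z') : v = u := by
  obtain ⟨x, y⟩ := u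
  obtain ⟨x', y'⟩ := v
  obtain ⟨a, b⟩ := z
  obtain ⟨c, d⟩ := z'
  simp only [manhattan, Prod.mk.injEq] at *
  rcases hzz' with rfl | rfl <;> simp only [Nat.dist, Nat.sub_self, add_zero] at * <;> omega

lemma eq_of_manhattan_eq_of_vertical_pair {c b b' : ℕ} {z : ℕ × ℕ} (hb : b < u.2) (hb' : u.2 < b')
    (hzc : z.1 ≠ c) (h : manhattan v (c, b) = manhattan u (c, b))
    (h' : manhattan v (c, b') = manhattan u (c, b')) (hz : manhattan v z = manhattan u z) :
    v = u := by
  simp only [manhattan] at h h' hz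
  have h₂ : v.2 = u.2 := Nat.eq_of_dist_add_dist_eq hb hb' (by omega)
  rw [h₂] at h hz
  exact Prod.ext (Nat.eq_of_dist_eq_of_dist_eq hzc (by omega) (by omega)) h₂

lemma eq_of_manhattan_eq_of_horizontal_pair {c a a' : ℕ} {z : ℕ × ℕ} (ha : a < u.1) (ha' : u.1 < a')
    (hzc : z.2 ≠ c) (h : manhattan v (a, c) = manhattan u (a, c))
    (h' : manhattan v (a', c) = manhattan u (a', c)) (hz : manhattan v z = manhattan u z) :
    v = u := by
  refine Prod.swap_injective (eq_of_manhattan_eq_of_vertical_pair (z := z.swap) ha ha' hzc ?_ ?_ ?_)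
  all_goals simp only [manhattan, Prod.fst_swap, Prod.snd_swap] at *; omega

lemma eq_of_manhattan_eq_of_mem_cell {s a b : ℕ} {S : Set (ℕ × ℕ)}
    (hS : ∀ z ∈ S, manhattan u z ≤ s + 1 → manhattan v z = manhattan u z)
    (h₀₀ : (a, b) ∈ S) (h₁₀ : (a + s, b) ∈ S) (h₀₁ : (a, b + s) ∈ S) (h₁₁ : (a + s, b + s) ∈ S)
    (hmid : (a + s / 2, b + s / 2) ∈ S) (hx : a ≤ u.1) (hx' : u.1 ≤ a + s) (hy : b ≤ u.2)
    (hy' : u.2 ≤ b + s) : v = u := by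
  obtain ⟨x, y⟩ := u
  dsimp only at hx hx' hy hy'
  have side : ∀ z ∈ S, ∀ z' ∈ S, z.1 = z'.1 ∨ z.2 = z'.2 →
      manhattan (x, y) z + manhattan (x, y) z' = manhattan z z' ∧ manhattan z z' ≤ s + 1 →
        v = (x, y) := fun z hz z' hz' hzz' ⟨hu, hr⟩ =>
    eq_of_manhattan_eq_of_mem_segment hzz' hu (hS z hz (by omega)) (hS z' hz' (by omega))
  rcases (by omega : x = a ∨ x = a + s ∨ y = b ∨ y = b + s ∨
      (a < x ∧ x < a + s ∧ b < y ∧ y < b + s)) with rfl | rfl | rfl | rfl | ⟨hx, hx', hy, hy'⟩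
  · exact side _ h₀₀ _ h₀₁ (Or.inl rfl) (by simp only [manhattan, Nat.dist]; omega)
  · exact side _ h₁₀ _ h₁₁ (Or.inl rfl) (by simp only [manhattan, Nat.dist]; omega)
  · exact side _ h₀₀ _ h₁₀ (Or.inr rfl) (by simp only [manhattan, Nat.dist]; omega)
  · exact side _ h₀₁ _ h₁₁ (Or.inr rfl) (by simp only [manhattan, Nat.dist]; omega)
  have hmid' := hS _ hmid (by simp only [manhattan, Nat.dist]; omega)
  -- If `x` is at most one farther from its nearer vertical side than `y` from its nearer
  -- horizontal side, both corners of that vertical side are within `s + 1`; otherwise the same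
  -- holds with the axes exchanged.
  rcases (by simp only [manhattan, Nat.dist]; omega :
      (manhattan (x, y) (a, b) ≤ s + 1 ∧ manhattan (x, y) (a, b + s) ≤ s + 1) ∨
      (manhattan (x, y) (a + s, b) ≤ s + 1 ∧ manhattan (x, y) (a + s, b + s) ≤ s + 1) ∨
      (manhattan (x, y) (a, b) ≤ s + 1 ∧ manhattan (x, y) (a + s, b) ≤ s + 1) ∨
      (manhattan (x, y) (a, b + s) ≤ s + 1 ∧ manhattan (x, y) (a + s, b + s) ≤ s + 1))
    with ⟨h, h'⟩ | ⟨h, h'⟩ | ⟨h, h'⟩ | ⟨h, h'⟩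
  · exact eq_of_manhattan_eq_of_vertical_pair hy hy' (by dsimp only; omega)
      (hS _ h₀₀ h) (hS _ h₀₁ h') hmid'
  · exact eq_of_manhattan_eq_of_vertical_pair hy hy' (by dsimp only; omega)
      (hS _ h₁₀ h) (hS _ h₁₁ h') hmid'
  · exact eq_of_manhattan_eq_of_horizontal_pair hx hx' (by dsimp only; omega)
      (hS _ h₀₀ h) (hS _ h₁₀ h') hmid'
  · exact eq_of_manhattan_eq_of_horizontal_pair hx hx' (by dsimp only; omega)
      (hS _ h₀₁ h) (hS _ h₁₁ h') hmid'

end Manhattan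

section DistK

variable {V : Type*}

lemma isDistKResolving_univ (G : SimpleGraph V) (k : ℕ) : IsDistKResolving G k Set.univ :=
  fun x y hxy => ⟨x, trivial, by
    rw [distK, distK, edist_self, min_eq_left zero_le]
    exact (lt_min (G.edist_pos_of_ne hxy.symm) (by simp)).ne⟩

variable [Fintype V]

lemma exists_isDistKResolving_card_eq_dimK (G : SimpleGraph V) (k : ℕ) :
    ∃ S : Finset V, IsDistKResolving G k S ∧ #S = dimK G k :=
  Nat.sInf_mem (s := {m | ∃ S : Finset V, IsDistKResolving G k S ∧ #S = m})
    ⟨_, univ, by simpa using isDistKResolving_univ G k, rfl⟩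

lemma dimK_le_card {G : SimpleGraph V} {k : ℕ} {S : Finset V} (hS : IsDistKResolving G k S) :
    dimK G k ≤ #S :=
  Nat.sInf_le ⟨S, hS, rfl⟩

theorem card_le_one_add_dimK_mul (G : SimpleGraph V) (k b : ℕ)
    (hball : ∀ z, #{u | G.edist u z ≤ k} ≤ b) : Fintype.card V ≤ 1 + dimK G k * b := by
  classical
  obtain ⟨S, hS, hcard⟩ := exists_isDistKResolving_card_eq_dimK G k
  have hfar : #{u | ∀ z ∈ S, (k : ℕ∞) < G.edist u z} ≤ 1 := by
    refine card_le_one.2 fun x hx y hy => by_contra fun hxy => ?_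
    obtain ⟨z, hz, hne⟩ := hS x y hxy
    simp only [mem_filter, mem_univ, true_and] at hx hy
    exact hne (by rw [distK, distK, min_eq_right (Order.add_one_le_of_lt (hx z hz)),
      min_eq_right (Order.add_one_le_of_lt (hy z hz))])
  have hcover : (univ : Finset V) ⊆ ({u | ∀ z ∈ S, (k : ℕ∞) < G.edist u z} : Finset V) ∪
      S.biUnion fun z => ({u | G.edist u z ≤ k} : Finset V) := by
    intro u _
    by_cases hu : ∀ z ∈ S, (k : ℕ∞) < G.edist u z
    · exact mem_union_left _ (by simpa using hu)
    · obtain ⟨z, hz, hle⟩ : ∃ z ∈ S, G.edist u z ≤ k := by simpa using hu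
      exact mem_union_right _ (mem_biUnion.2 ⟨z, hz, by simpa using hle⟩)
  calc Fintype.card V = #(univ : Finset V) := rfl
    _ ≤ 1 + #S * b := by
      refine (card_le_card hcover).trans ((card_union_le _ _).trans (add_le_add hfar ?_))
      exact card_biUnion_le.trans (sum_le_card_nsmul _ _ _ fun z _ => hball z)
    _ = 1 + dimK G k * b := by rw [hcard]

end DistK

lemma card_ball_pathGraph_le (n k : ℕ) (z : Fin n) :
    #{i | (pathGraph n).edist i z ≤ k} ≤ 2 * k + 1 := by
  calc #{i | (pathGraph n).edist i z ≤ k} ≤ #(Icc (z - k : ℕ) (z + k)) := by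
        refine card_le_card_of_injOn Fin.val (fun i hi => ?_) Fin.val_injective.injOn
        simp only [coe_filter, mem_univ, true_and, Set.mem_ofPred_eq, pathGraph_edist,
          Nat.cast_le] at hi
        simp only [coe_Icc, Set.mem_Icc]
        unfold Nat.dist at hi
        omega
    _ ≤ 2 * k + 1 := by rw [Nat.card_Icc]; omega

lemma card_ball_boxProd_le {α β : Type*} [Fintype α] [Fintype β] (G : SimpleGraph α)
    (H : SimpleGraph β) (k : ℕ) (z : α × β) :
    #{u | (G □ H).edist u z ≤ k} ≤ #{x | G.edist x z.1 ≤ k} * #{y | H.edist y z.2 ≤ k} := by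
  rw [← card_product]
  refine card_le_card fun u hu => ?_
  simp only [mem_filter, mem_univ, true_and, mem_product, edist_boxProd] at hu ⊢
  exact ⟨le_self_add.trans hu, le_add_self.trans hu⟩

theorem pow_four_le_one_add_dimK_grid_mul (k : ℕ) :
    k ^ 4 ≤ 1 + dimK (pathGraph (k ^ 2) □ pathGraph (k ^ 2)) k * (2 * k + 1) ^ 2 := by
  have h := card_le_one_add_dimK_mul (pathGraph (k ^ 2) □ pathGraph (k ^ 2)) k ((2 * k + 1) ^ 2)
    fun z => (card_ball_boxProd_le _ _ k z).trans <|
      (Nat.mul_le_mul (card_ball_pathGraph_le _ k _) (card_ball_pathGraph_le _ k _)).trans_eq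
        (sq _).symm
  simpa [← pow_add] using h

section Landmarks

variable {k : ℕ}

lemma sq_eq_succ_mul_pred_add_one (hk : 1 ≤ k) : k ^ 2 = (k + 1) * (k - 1) + 1 := by
  obtain ⟨m, rfl⟩ := Nat.exists_eq_add_of_le' hk
  simp only [Nat.add_sub_cancel]
  ring

def gridLines (k : ℕ) : Finset ℕ := (range (k + 2)).image (· * (k - 1))

def midLines (k : ℕ) : Finset ℕ := (range (k + 1)).image fun i => i * (k - 1) + (k - 1) / 2

def landmarkCoords (k : ℕ) : Finset (ℕ × ℕ) :=
  gridLines k ×ˢ gridLines k ∪ midLines k ×ˢ midLines k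

def landmarks (k : ℕ) : Finset (Fin (k ^ 2) × Fin (k ^ 2)) :=
  {z | Prod.map Fin.val Fin.val z ∈ landmarkCoords k}

lemma exists_cell_of_lt_sq (hk : 1 ≤ k) {x : ℕ} (hx : x < k ^ 2) :
    ∃ a ∈ gridLines k, a + (k - 1) ∈ gridLines k ∧ a + (k - 1) / 2 ∈ midLines k ∧
      a ≤ x ∧ x ≤ a + (k - 1) := by
  rw [sq_eq_succ_mul_pred_add_one hk, add_one_mul] at hx
  obtain ⟨j, hj, hjx, hxj⟩ : ∃ j ≤ k, j * (k - 1) ≤ x ∧ x ≤ j * (k - 1) + (k - 1) := by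
    rcases Nat.eq_zero_or_pos (k - 1) with hs | hs
    · exact ⟨0, Nat.zero_le _, by simp, by simp only [hs] at hx ⊢; omega⟩
    by_cases hq : x / (k - 1) ≤ k
    · exact ⟨x / (k - 1), hq, Nat.div_mul_le_self x _, (Nat.lt_div_mul_add hs).le⟩
    · exact ⟨k, le_rfl, (Nat.mul_le_mul_right _ (by omega)).trans (Nat.div_mul_le_self x _),
        by omega⟩
  exact ⟨j * (k - 1), mem_image_of_mem _ (mem_range.2 (by omega)),
    mem_image.2 ⟨j + 1, mem_range.2 (by omega), add_one_mul _ _⟩,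
    mem_image_of_mem (fun i => i * (k - 1) + (k - 1) / 2) (mem_range.2 (by omega)), hjx, hxj⟩

lemma lt_sq_of_mem_gridLines (hk : 1 ≤ k) {c : ℕ} (hc : c ∈ gridLines k) : c < k ^ 2 := by
  obtain ⟨i, hi, rfl⟩ := mem_image.1 hc
  rw [sq_eq_succ_mul_pred_add_one hk, Nat.lt_succ_iff]
  exact Nat.mul_le_mul_right _ (by simpa [Nat.lt_succ_iff] using hi)

lemma lt_sq_of_mem_midLines (hk : 1 ≤ k) {c : ℕ} (hc : c ∈ midLines k) : c < k ^ 2 := by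
  obtain ⟨i, hi, rfl⟩ := mem_image.1 hc
  refine lt_of_le_of_lt ?_ (lt_sq_of_mem_gridLines hk (mem_image_of_mem _ (mem_range.2
    (Nat.succ_lt_succ (mem_range.1 hi)))))
  rw [Nat.succ_mul]
  omega

lemma lt_sq_of_mem_landmarkCoords (hk : 1 ≤ k) {z : ℕ × ℕ} (hz : z ∈ landmarkCoords k) :
    z.1 < k ^ 2 ∧ z.2 < k ^ 2 := by
  rcases mem_union.1 hz with hz | hz <;> obtain ⟨h₁, h₂⟩ := mem_product.1 hz
  · exact ⟨lt_sq_of_mem_gridLines hk h₁, lt_sq_of_mem_gridLines hk h₂⟩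
  · exact ⟨lt_sq_of_mem_midLines hk h₁, lt_sq_of_mem_midLines hk h₂⟩

lemma card_landmarks_le (k : ℕ) : #(landmarks k) ≤ (k + 2) ^ 2 + (k + 1) ^ 2 := by
  calc #(landmarks k) ≤ #(landmarkCoords k) :=
        card_le_card_of_injOn _ (fun z hz => by simpa [landmarks] using hz)
          (Fin.val_injective.prodMap Fin.val_injective).injOn
    _ ≤ #(gridLines k) ^ 2 + #(midLines k) ^ 2 :=
        (card_union_le _ _).trans_eq (by simp only [card_product, sq])
    _ ≤ (k + 2) ^ 2 + (k + 1) ^ 2 := by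
        gcongr <;> exact card_image_le.trans (by simp)

theorem isDistKResolving_landmarks (hk : 1 ≤ k) :
    IsDistKResolving (pathGraph (k ^ 2) □ pathGraph (k ^ 2)) k (landmarks k) := by
  intro u v huv
  by_contra! h
  refine huv (Fin.val_injective.prodMap Fin.val_injective ?_).symm
  have agree : ∀ z ∈ (landmarkCoords k : Set (ℕ × ℕ)),
      manhattan (Prod.map Fin.val Fin.val u) z ≤ k - 1 + 1 →
        manhattan (Prod.map Fin.val Fin.val v) z = manhattan (Prod.map Fin.val Fin.val u) z := by
    intro z hz hle
    obtain ⟨hz₁, hz₂⟩ := lt_sq_of_mem_landmarkCoords hk hz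
    have hdist := h (⟨z.1, hz₁⟩, ⟨z.2, hz₂⟩) (by simpa [landmarks] using hz)
    simp only [distK, edist_pathGraph_boxProd, Prod.map_apply, Prod.mk.eta] at hdist
    rw [← Nat.cast_add_one, ← Nat.mono_cast.map_min, ← Nat.mono_cast.map_min,
      Nat.cast_inj] at hdist
    omega
  obtain ⟨a, ha, ha', ham, hxa, hxa'⟩ := exists_cell_of_lt_sq hk u.1.isLt
  obtain ⟨b, hb, hb', hbm, hyb, hyb'⟩ := exists_cell_of_lt_sq hk u.2.isLt
  exact eq_of_manhattan_eq_of_mem_cell agree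
    (by simp [landmarkCoords, ha, hb]) (by simp [landmarkCoords, ha', hb])
    (by simp [landmarkCoords, ha, hb']) (by simp [landmarkCoords, ha', hb'])
    (by simp [landmarkCoords, ham, hbm]) hxa hxa' hyb hyb'

theorem dimK_grid_le (hk : 1 ≤ k) :
    dimK (pathGraph (k ^ 2) □ pathGraph (k ^ 2)) k ≤ (k + 2) ^ 2 + (k + 1) ^ 2 :=
  (dimK_le_card (isDistKResolving_landmarks hk)).trans (card_landmarks_le k)

end Landmarks

/-- For any integer `k > 1`, the grid graph `G = P_{k²} □ P_{k²}` satisfies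
`k⁴/(2k+1)² - 1 ≤ dimₖ(G) ≤ (k+2)² + (k+1)²`; in particular `dimₖ(G) = Θ(k²)`. -/
theorem stmt3 :
    (∀ k : ℕ, 1 < k →
      (k : ℝ) ^ 4 / (2 * (k : ℝ) + 1) ^ 2 - 1
          ≤ (dimK (pathGraph (k ^ 2) □ pathGraph (k ^ 2)) k : ℝ) ∧
      dimK (pathGraph (k ^ 2) □ pathGraph (k ^ 2)) k ≤ (k + 2) ^ 2 + (k + 1) ^ 2) ∧
    (∃ c C : ℝ, 0 < c ∧ 0 < C ∧ ∀ k : ℕ, 1 < k →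
      c * (k : ℝ) ^ 2 ≤ (dimK (pathGraph (k ^ 2) □ pathGraph (k ^ 2)) k : ℝ) ∧
      (dimK (pathGraph (k ^ 2) □ pathGraph (k ^ 2)) k : ℝ) ≤ C * (k : ℝ) ^ 2) := by
  have lower (k : ℕ) : (k : ℝ) ^ 4 ≤
      1 + (dimK (pathGraph (k ^ 2) □ pathGraph (k ^ 2)) k : ℝ) * (2 * k + 1) ^ 2 := by
    exact_mod_cast pow_four_le_one_add_dimK_grid_mul k
  have upper (k : ℕ) (hk : 1 < k) : (dimK (pathGraph (k ^ 2) □ pathGraph (k ^ 2)) k : ℝ) ≤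
      (k + 2) ^ 2 + (k + 1) ^ 2 := by
    exact_mod_cast dimK_grid_le hk.le
  refine ⟨fun k hk => ⟨?_, dimK_grid_le hk.le⟩, 1 / 10, 7, by norm_num, by norm_num,
    fun k hk => ⟨?_, ?_⟩⟩
  · rw [sub_le_iff_le_add, div_le_iff₀ (by positivity)]
    have hone : (1 : ℝ) ≤ (2 * k + 1) ^ 2 := one_le_pow₀ (by linarith [k.cast_nonneg' (α := ℝ)])
    linarith [lower k]
  · have hk' : (2 : ℝ) ≤ k := by exact_mod_cast hk
    nlinarith [lower k, mul_nonneg (sub_nonneg.2 hk') (sq_nonneg (k : ℝ))]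
  · have hk' : (2 : ℝ) ≤ k := by exact_mod_cast hk
    nlinarith [upper k hk]
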